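/- arXiv:math/0306009 — 6 statements merged into one kernel-verified Lean document; each statement's English description precedes it below -/
import Mathlib

section
/- If p/q and p'/q' are two successive elements (in increasing order) of the Farey series of order n (the set of irreducible fractions in [0,1] with denominator at most n), then q·p' − q'·p = 1. -/
/-!
Write `x = p/q`. Shifting a Bézout solution of `q r - p s = 1` by multiples of `(p, q)` gives
one with `n - q < s ≤ n`, hence a fraction `w = r/s` of the Farey series just to the right of `x`.
Any fraction `a/b` strictly between `x` and `w` satisfies
`b = q (r b - s a) + s (q a - p b) ≥ q + s > n`, so `w` is the successor of `x`.
-/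

/-- The Farey series of order `n`: rationals in `[0,1]` (automatically in lowest
terms in `ℚ`) with denominator at most `n`. -/
def farey (n : ℕ) : Set ℚ := {x | 0 ≤ x ∧ x ≤ 1 ∧ x.den ≤ n}

theorem Int.exists_mul_sub_mul_eq_one_mem_Ioc {p q : ℤ} (hpq : IsCoprime p q) (hq : 0 < q)
    (n : ℤ) : ∃ r s : ℤ, q * r - s * p = 1 ∧ s ∈ Set.Ioc (n - q) n := by
  obtain ⟨u, v, huv⟩ := hpq
  refine ⟨v + p * ((n + u) / q), -u + q * ((n + u) / q), by linear_combination huv, ?_⟩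
  have := Int.mul_ediv_add_emod (n + u) q
  have := Int.emod_nonneg (n + u) hq.ne'
  have := Int.emod_lt_of_pos (n + u) hq
  constructor <;> linarith

theorem Rat.exists_unimodular_den_mem_Ioc (x : ℚ) {n : ℤ} (hn : (x.den : ℤ) ≤ n) :
    ∃ w : ℚ, (x.den : ℤ) * w.num - w.den * x.num = 1 ∧ (w.den : ℤ) ∈ Set.Ioc (n - x.den) n := by
  obtain ⟨r, s, hrs, hs_gt, hs_le⟩ :=
    Int.exists_mul_sub_mul_eq_one_mem_Ioc x.isCoprime_num_den (by exact_mod_cast x.pos) n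
  have hs : 0 < s := by omega
  have hcop : Nat.Coprime r.natAbs s.natAbs :=
    Int.isCoprime_iff_gcd_eq_one.mp ⟨x.den, -x.num, by linear_combination hrs⟩
  refine ⟨r / s, ?_, ?_⟩ <;> rw [Rat.den_div_eq_of_coprime hs hcop]
  · rwa [Rat.num_div_eq_of_coprime hs hcop]
  · exact ⟨hs_gt, hs_le⟩

theorem Rat.lt_of_unimodular {x w : ℚ} (h : (x.den : ℤ) * w.num - w.den * x.num = 1) : x < w :=
  (Rat.lt_iff x w).mpr (by linarith)

theorem Rat.add_den_le_den_of_unimodular {x z w : ℚ}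
    (h : (x.den : ℤ) * w.num - w.den * x.num = 1) (hxz : x < z) (hzw : z < w) :
    (x.den : ℤ) + w.den ≤ z.den := by
  have hleft : 0 ≤ (x.den : ℤ) * z.num - z.den * x.num - 1 := by
    have := (Rat.lt_iff x z).mp hxz; linarith
  have hright : 0 ≤ (z.den : ℤ) * w.num - w.den * z.num - 1 := by
    have := (Rat.lt_iff z w).mp hzw; linarith
  have hden : (z.den : ℤ) - x.den - w.den =
      x.den * (z.den * w.num - w.den * z.num - 1) + w.den * (x.den * z.num - z.den * x.num - 1) := by
    linear_combination -(z.den : ℤ) * h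
  rw [← sub_nonneg, sub_add_eq_sub_sub, hden]
  positivity

theorem farey_succ_unimodular_general (n : ℕ) (x y : ℚ)
    (hx : x ∈ farey n) (hy : y ∈ farey n) (hxy : x < y)
    (hsucc : ∀ z ∈ farey n, ¬(x < z ∧ z < y)) :
    (x.den : ℤ) * y.num - (y.den : ℤ) * x.num = 1 := by
  obtain ⟨hx0, -, hxn⟩ := hx
  obtain ⟨-, hy1, hyn⟩ := hy
  obtain ⟨w, hxw, hnw, hwn⟩ := x.exists_unimodular_den_mem_Ioc (n := n) (by exact_mod_cast hxn)
  have hxw_lt : x < w := Rat.lt_of_unimodular hxw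
  rcases lt_trichotomy y w with hyw | rfl | hwy
  · have := Rat.add_den_le_den_of_unimodular hxw hxy hyw
    omega
  · exact hxw
  · have hw : w ∈ farey n := ⟨hx0.trans hxw_lt.le, hwy.le.trans hy1, by exact_mod_cast hwn⟩
    exact absurd ⟨hxw_lt, hwy⟩ (hsucc w hw)

theorem farey_succ_unimodular (n : ℕ) (hn : 1 ≤ n) (x y : ℚ)
    (hx : x ∈ farey n) (hy : y ∈ farey n) (hxy : x < y)
    (hsucc : ∀ z ∈ farey n, ¬(x < z ∧ z < y)) :
    (x.den : ℤ) * y.num - (y.den : ℤ) * x.num = 1 :=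
  farey_succ_unimodular_general n x y hx hy hxy hsucc
end

section
/- If p'/q', p/q, p''/q'' are three successive elements (in this order) of the Farey series of order n, then p/q = (p' + p'')/(q' + q''), i.e., the middle fraction equals the mediant of its neighbors. -/
namespace Rat

theorem lt_of_num_mul_den_sub_num_mul_den_eq_one {x w : ℚ}
    (h : w.num * x.den - x.num * w.den = 1) : x < w := by
  rw [Rat.lt_iff]
  linarith

theorem den_add_den_le_of_lt_of_lt {x y w : ℚ} (h : w.num * x.den - x.num * w.den = 1)
    (hxy : x < y) (hyw : y < w) : x.den + w.den ≤ y.den := by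
  rw [Rat.lt_iff] at hxy hyw
  have hleft : 1 ≤ y.num * x.den - x.num * y.den := by linarith
  have hright : 1 ≤ w.num * y.den - y.num * w.den := by linarith
  have hsplit : (y.den : ℤ) = x.den * (w.num * y.den - y.num * w.den)
      + w.den * (y.num * x.den - x.num * y.den) := by
    linear_combination (-(y.den : ℤ)) * h
  have : (x.den + w.den : ℤ) ≤ y.den := by
    rw [hsplit]
    gcongr
    · nlinarith [x.den_pos]
    · nlinarith [w.den_pos]
  exact_mod_cast this

theorem exists_num_mul_den_sub_num_mul_den_eq_one (x : ℚ) {n : ℕ} (hn : x.den ≤ n) :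
    ∃ w : ℚ, w.num * x.den - x.num * w.den = 1 ∧ w.den ≤ n ∧ n < x.den + w.den := by
  obtain ⟨u, v, huv⟩ := x.isCoprime_num_den
  have hb : (0 : ℤ) < x.den := by exact_mod_cast x.den_pos
  -- shift the Bézout solution `(v, -u)` by a multiple of `(x.num, x.den)` into the window
  set t := ((n : ℤ) + u) / x.den
  set c := v + t * x.num
  set d := t * x.den - u
  have hd_le : d ≤ n := by linarith [Int.ediv_mul_le ((n : ℤ) + u) hb.ne']
  have hd_gt : n - x.den < d := by
    linarith [Int.lt_ediv_add_one_mul_self ((n : ℤ) + u) hb]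
  have hd : 0 < d := by linarith [show (x.den : ℤ) ≤ n by exact_mod_cast hn]
  have hdet : c * x.den - x.num * d = 1 := by linear_combination huv
  have hcop : c.natAbs.Coprime d.natAbs :=
    Int.isCoprime_iff_nat_coprime.mp ⟨x.den, -x.num, by linear_combination hdet⟩
  have hnum : ((c : ℚ) / d).num = c := num_div_eq_of_coprime hd hcop
  have hden : (((c : ℚ) / d).den : ℤ) = d := den_div_eq_of_coprime hd hcop
  refine ⟨c / d, ?_, ?_, ?_⟩
  · rw [hnum, hden, hdet]
  · exact_mod_cast hden ▸ hd_le
  · have : (n : ℤ) < x.den + ((c : ℚ) / d).den := by rw [hden]; linarith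
    exact_mod_cast this

theorem mediant_eq_of_num_mul_den_sub_num_mul_den_eq {x y z : ℚ}
    (h : y.num * x.den - x.num * y.den = z.num * y.den - y.num * z.den) :
    y = ((x.num + z.num : ℤ) : ℚ) / ((x.den + z.den : ℕ) : ℚ) := by
  have hden : ((x.den + z.den : ℕ) : ℚ) ≠ 0 := by positivity
  have hy : (y.den : ℚ) ≠ 0 := by positivity
  have hQ : (y.num : ℚ) * (x.den + z.den) = y.den * (x.num + z.num) := by
    exact_mod_cast (by linear_combination h : y.num * (x.den + z.den : ℤ) = y.den * (x.num + z.num))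
  rw [eq_div_iff hden, ← y.num_div_den, div_mul_eq_mul_div, div_eq_iff hy]
  push_cast
  linear_combination hQ

end Rat

open Rat in
theorem farey_succ_num_mul_den_sub_num_mul_den {n : ℕ} {x y : ℚ}
    (hx : x ∈ farey n) (hy : y ∈ farey n) (hxy : x < y)
    (hsucc : ∀ w ∈ farey n, ¬(x < w ∧ w < y)) :
    y.num * x.den - x.num * y.den = 1 := by
  obtain ⟨w, hdet, hw_le, hw_gt⟩ := exists_num_mul_den_sub_num_mul_den_eq_one x hx.2.2
  have hxw := lt_of_num_mul_den_sub_num_mul_den_eq_one hdet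
  rcases lt_trichotomy w y with hwy | rfl | hyw
  · exact absurd ⟨hxw, hwy⟩ <| hsucc w ⟨hx.1.trans hxw.le, hwy.le.trans hy.2.1, hw_le⟩
  · exact hdet
  · have := den_add_den_le_of_lt_of_lt hdet hxy hyw
    have := hy.2.2
    omega

theorem farey_middle_is_mediant_general (n : ℕ) (x y z : ℚ)
    (hx : x ∈ farey n) (hy : y ∈ farey n) (hz : z ∈ farey n)
    (hxy : x < y) (hyz : y < z)
    (hsucc₁ : ∀ w ∈ farey n, ¬(x < w ∧ w < y))
    (hsucc₂ : ∀ w ∈ farey n, ¬(y < w ∧ w < z)) :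
    y = ((x.num + z.num : ℤ) : ℚ) / ((x.den + z.den : ℕ) : ℚ) := by
  apply Rat.mediant_eq_of_num_mul_den_sub_num_mul_den_eq
  rw [farey_succ_num_mul_den_sub_num_mul_den hx hy hxy hsucc₁,
    farey_succ_num_mul_den_sub_num_mul_den hy hz hyz hsucc₂]

theorem farey_middle_is_mediant (n : ℕ) (hn : 1 ≤ n) (x y z : ℚ)
    (hx : x ∈ farey n) (hy : y ∈ farey n) (hz : z ∈ farey n)
    (hxy : x < y) (hyz : y < z)
    (hsucc₁ : ∀ w ∈ farey n, ¬(x < w ∧ w < y))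
    (hsucc₂ : ∀ w ∈ farey n, ¬(y < w ∧ w < z)) :
    y = ((x.num + z.num : ℤ) : ℚ) / ((x.den + z.den : ℕ) : ℚ) :=
  farey_middle_is_mediant_general n x y z hx hy hz hxy hyz hsucc₁ hsucc₂
end

section
/- Let p/q ∈ F_n be an element of the Farey series of order n, with immediate predecessor p'/q' in F_n. Set r = ⌊(n + q')/q⌋, P = −p' + r·p, Q = −q' + r·q. Then P/Q is an irreducible fraction with 0 < Q ≤ n and P/Q is the immediate successor of p/q in F_n. -/
/-- Gap lemma: if p/q < a/b < P/Q with P*q - p*Q = 1, then b ≥ q + Q. -/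
lemma farey_gap {p q P Q a b : ℤ} (hq : 0 < q) (hQ : 0 < Q) (hb : 0 < b)
    (huni : P * q - p * Q = 1)
    (h1 : (p : ℚ) / q < (a : ℚ) / b) (h2 : (a : ℚ) / b < (P : ℚ) / Q) :
    q + Q ≤ b := by
  have hq' : (0:ℚ) < (q:ℚ) := by exact_mod_cast hq
  have hQ' : (0:ℚ) < (Q:ℚ) := by exact_mod_cast hQ
  have hb' : (0:ℚ) < (b:ℚ) := by exact_mod_cast hb
  rw [div_lt_div_iff₀ hq' hb'] at h1
  rw [div_lt_div_iff₀ hb' hQ'] at h2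
  have h1' : p * b < a * q := by exact_mod_cast h1
  have h2' : a * Q < P * b := by exact_mod_cast h2
  have h1'' : 1 ≤ a * q - p * b := by omega
  have h2'' : 1 ≤ P * b - a * Q := by omega
  nlinarith [mul_le_mul_of_nonneg_left h1'' hQ.le, mul_le_mul_of_nonneg_left h2'' hq.le]

lemma div_lt_div_of_uni {p q P Q : ℤ} (hq : 0 < q) (hQ : 0 < Q)
    (huni : P * q - p * Q = 1) : (p : ℚ) / q < (P : ℚ) / Q := by
  have hq' : (0:ℚ) < (q:ℚ) := by exact_mod_cast hq
  have hQ' : (0:ℚ) < (Q:ℚ) := by exact_mod_cast hQ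
  rw [div_lt_div_iff₀ hq' hQ']
  have : p * Q < P * q := by omega
  exact_mod_cast this

theorem farey_successor_construction (n : ℕ) (hn : 2 ≤ n) (x x' : ℚ)
    (hx : x ∈ farey n) (hx0 : x ≠ 0) (hx1 : x ≠ 1)
    (hx' : x' ∈ farey n) (hlt : x' < x)
    (hpred : ∀ z ∈ farey n, ¬(x' < z ∧ z < x)) :
    let r : ℤ := ⌊((n : ℚ) + (x'.den : ℚ)) / (x.den : ℚ)⌋
    let P : ℤ := -x'.num + r * x.num
    let Q : ℤ := -(x'.den : ℤ) + r * (x.den : ℤ)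
    Int.gcd P Q = 1 ∧ 0 < Q ∧ Q ≤ (n : ℤ) ∧
      ((P : ℚ) / (Q : ℚ)) ∈ farey n ∧ x < (P : ℚ) / (Q : ℚ) ∧
      ∀ z ∈ farey n, ¬(x < z ∧ z < (P : ℚ) / (Q : ℚ)) := by
  intro r P Q
  obtain ⟨hx0', hx1', hxden⟩ := hx
  obtain ⟨hx'0, hx'1, hx'den⟩ := hx'
  have hq0 : 0 < (x.den : ℤ) := by exact_mod_cast x.pos
  have hqn : (x.den : ℤ) ≤ n := by exact_mod_cast hxden
  have hxpos : 0 < x := lt_of_le_of_ne hx0' (Ne.symm hx0)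
  have hp0 : 0 < x.num := Rat.num_pos.mpr hxpos
  have hxlt1 : x < 1 := lt_of_le_of_ne hx1' hx1
  have hxeq : x = (x.num : ℚ) / (x.den : ℚ) := (Rat.num_div_den x).symm
  -- Step 1 : find the unimodular left neighbour X/Y of x with n - q < Y ≤ n
  have key : ∃ Y X : ℤ, x.num * Y - (x.den : ℤ) * X = 1 ∧
      (n : ℤ) - x.den < Y ∧ Y ≤ n ∧ 0 ≤ X := by
    have hcop : IsCoprime x.num (x.den : ℤ) := by
      rw [Int.isCoprime_iff_gcd_eq_one]
      simpa [Int.gcd] using x.reduced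
    obtain ⟨a, b, hab⟩ := hcop
    have hmod1 := Int.emod_nonneg ((n : ℤ) - a) (ne_of_gt hq0)
    have hmod2 := Int.emod_lt_of_pos ((n : ℤ) - a) hq0
    have hdm : (x.den : ℤ) * (((n : ℤ) - a) / (x.den : ℤ)) + ((n : ℤ) - a) % (x.den : ℤ)
        = (n : ℤ) - a := Int.mul_ediv_add_emod _ _
    have hYeq : (n : ℤ) - ((n : ℤ) - a) % (x.den : ℤ)
        = a + (x.den : ℤ) * (((n : ℤ) - a) / (x.den : ℤ)) := by omega
    refine ⟨(n : ℤ) - ((n : ℤ) - a) % (x.den : ℤ),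
      -b + x.num * (((n : ℤ) - a) / (x.den : ℤ)), ?_, by omega, by omega, ?_⟩
    · rw [hYeq]; linear_combination hab
    · have hY0 : 0 < (n : ℤ) - ((n : ℤ) - a) % (x.den : ℤ) := by omega
      have huni : x.num * ((n : ℤ) - ((n : ℤ) - a) % (x.den : ℤ)) -
          (x.den : ℤ) * (-b + x.num * (((n : ℤ) - a) / (x.den : ℤ))) = 1 := by
        rw [hYeq]; linear_combination hab
      nlinarith [mul_pos hp0 hY0, hq0]
  obtain ⟨Y, X, huniY, hYlb, hYub, hX0⟩ := key
  have hY0 : 0 < Y := by omega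
  -- Step 2 : identify x' with X / Y
  have hwlt : (X : ℚ) / Y < x := by
    rw [hxeq]
    exact div_lt_div_of_uni hY0 hq0 (by linear_combination huniY)
  have hwmem : (X : ℚ) / Y ∈ farey n := by
    refine ⟨div_nonneg (by exact_mod_cast hX0) (by positivity), le_of_lt (lt_of_lt_of_le hwlt hx1'), ?_⟩
    have hdvd : ((((X : ℚ) / Y)).den : ℤ) ∣ Y := by
      rw [← Rat.divInt_eq_div]; exact Rat.den_dvd X Y
    have := Int.le_of_dvd hY0 hdvd
    omega
  have h1 : ¬ x' < (X : ℚ) / Y := fun h => hpred _ hwmem ⟨h, hwlt⟩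
  have h2 : ¬ (X : ℚ) / Y < x' := by
    intro h
    have hx'eq : x' = (x'.num : ℚ) / (x'.den : ℚ) := (Rat.num_div_den x').symm
    have hbpos : 0 < (x'.den : ℤ) := by exact_mod_cast x'.pos
    have hgap := farey_gap (p := X) (q := Y) (P := x.num) (Q := (x.den : ℤ))
      (a := x'.num) (b := (x'.den : ℤ)) hY0 hq0 hbpos (by linear_combination huniY)
      (by push_cast; rw [← hx'eq]; exact h) (by push_cast; rw [← hx'eq, ← hxeq]; exact hlt)
    have : (x'.den : ℤ) ≤ n := by exact_mod_cast hx'den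
    omega
  have hw : x' = (X : ℚ) / Y := le_antisymm (not_lt.mp h2) (not_lt.mp h1)
  have hcopXY : Nat.Coprime X.natAbs Y.natAbs := by
    have : IsCoprime X Y := ⟨-(x.den : ℤ), x.num, by linear_combination huniY⟩
    exact Int.isCoprime_iff_gcd_eq_one.mp this
  have hnum : x'.num = X := by rw [hw]; exact Rat.num_div_eq_of_coprime hY0 hcopXY
  have hden : (x'.den : ℤ) = Y := by rw [hw]; exact Rat.den_div_eq_of_coprime hY0 hcopXY
  -- Step 3 : bounds on r
  have hq0' : (0 : ℚ) < (x.den : ℚ) := by exact_mod_cast hq0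
  have hrl : r * x.den ≤ (n : ℤ) + Y := by
    have h1 : (r : ℚ) ≤ ((n : ℚ) + (x'.den : ℚ)) / (x.den : ℚ) := Int.floor_le _
    have h2 : (r : ℚ) * (x.den : ℚ) ≤ (n : ℚ) + (x'.den : ℚ) := (le_div_iff₀ hq0').mp h1
    have h3 : r * (x.den : ℤ) ≤ (n : ℤ) + (x'.den : ℤ) := by exact_mod_cast h2
    omega
  have hru : (n : ℤ) + Y < r * x.den + x.den := by
    have h1 : ((n : ℚ) + (x'.den : ℚ)) / (x.den : ℚ) < (r : ℚ) + 1 := Int.lt_floor_add_one _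
    have h2 : (n : ℚ) + (x'.den : ℚ) < ((r : ℚ) + 1) * (x.den : ℚ) := (div_lt_iff₀ hq0').mp h1
    have h3 : (n : ℤ) + (x'.den : ℤ) < (r + 1) * (x.den : ℤ) := by exact_mod_cast h2
    have : (r + 1) * (x.den : ℤ) = r * x.den + x.den := by ring
    omega
  -- Step 4 : facts about P and Q
  have hQdef : Q = -Y + r * x.den := by
    have : Q = -(x'.den : ℤ) + r * (x.den : ℤ) := rfl
    omega
  have hQ0 : 0 < Q := by omega
  have hQn : Q ≤ (n : ℤ) := by omega
  have hQlb : (n : ℤ) - x.den < Q := by omega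
  have hPdef : P = -X + r * x.num := by
    have h : P = -x'.num + r * x.num := rfl
    rw [h, hnum]
  have huniPQ : P * x.den - x.num * Q = 1 := by
    rw [hPdef, hQdef]; linear_combination huniY
  have hP0 : 0 < P := by nlinarith [mul_pos hp0 hQ0, hq0]
  have hgcd : Int.gcd P Q = 1 := by
    have : IsCoprime P Q := ⟨(x.den : ℤ), -x.num, by linear_combination huniPQ⟩
    exact Int.isCoprime_iff_gcd_eq_one.mp this
  have hxy : x < (P : ℚ) / Q := by
    rw [hxeq]; exact div_lt_div_of_uni hq0 hQ0 huniPQ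
  have hyle1 : (P : ℚ) / Q ≤ 1 := by
    by_contra hcon
    push_neg at hcon
    have h1 : (x.num : ℚ) / (x.den : ℚ) < ((1 : ℤ) : ℚ) / ((1 : ℤ) : ℚ) := by
      simpa using (hxeq ▸ hxlt1)
    have h2 : ((1 : ℤ) : ℚ) / ((1 : ℤ) : ℚ) < (P : ℚ) / Q := by simpa using hcon
    have := farey_gap (p := x.num) (q := (x.den : ℤ)) (P := P) (Q := Q)
      (a := 1) (b := 1) hq0 hQ0 one_pos huniPQ h1 h2
    omega
  have hymem : ((P : ℚ) / Q) ∈ farey n := by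
    refine ⟨le_of_lt (lt_trans hxpos hxy), hyle1, ?_⟩
    have hdvd : ((((P : ℚ) / Q)).den : ℤ) ∣ Q := by
      rw [← Rat.divInt_eq_div]; exact Rat.den_dvd P Q
    have := Int.le_of_dvd hQ0 hdvd
    omega
  refine ⟨hgcd, hQ0, hQn, hymem, hxy, ?_⟩
  rintro z ⟨hz0, hz1, hzden⟩ ⟨hzl, hzr⟩
  have hzeq : z = (z.num : ℚ) / (z.den : ℚ) := (Rat.num_div_den z).symm
  have hbpos : 0 < (z.den : ℤ) := by exact_mod_cast z.pos
  have hgap := farey_gap (p := x.num) (q := (x.den : ℤ)) (P := P) (Q := Q)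
    (a := z.num) (b := (z.den : ℤ)) hq0 hQ0 hbpos huniPQ
    (by push_cast; rw [← hzeq, ← hxeq]; exact hzl) (by push_cast; rw [← hzeq]; exact hzr)
  have : (z.den : ℤ) ≤ n := by exact_mod_cast hzden
  omega
end

section
/- With the notation of the Truncate/Subtract construction, p/q − p_T/q_T = (−1)^{n̄+1} ε_0⋯ε_{n̄−1} / (q q_{n̄−1}) and p/q − p_S/q_S = (−1)^{n̄} ε_0⋯ε_{n̄−1} / (q q_S). In particular p_T/q_T and p_S/q_S lie on opposite sides of p/q. -/
lemma det_identity (a ε p q : ℕ → ℤ)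
    (hp0 : p 0 = 0) (hp1 : p 1 = 1) (hq0 : q 0 = 1) (hq1 : q 1 = 0)
    (hp2 : p 2 = a 0 * p 1 + p 0) (hq2 : q 2 = a 0 * q 1 + q 0)
    (hp : ∀ k, p (k + 3) = a (k + 1) * p (k + 2) + ε k * p (k + 1))
    (hq : ∀ k, q (k + 3) = a (k + 1) * q (k + 2) + ε k * q (k + 1)) :
    ∀ N : ℕ, p (N + 2) * q (N + 1) - q (N + 2) * p (N + 1)
      = (-1) ^ (N + 1) * ∏ i ∈ Finset.range N, ε i := by
  intro N
  induction N with
  | zero => simp [hp2, hq2, hp0, hp1, hq0, hq1]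
  | succ n ih =>
      rw [hp n, hq n, Finset.prod_range_succ]
      have : (a (n + 1) * p (n + 2) + ε n * p (n + 1)) * q (n + 2) -
          (a (n + 1) * q (n + 2) + ε n * q (n + 1)) * p (n + 2)
          = -ε n * (p (n + 2) * q (n + 1) - q (n + 2) * p (n + 1)) := by ring
      rw [this, ih, pow_succ]
      ring

/-- With `p k`, `q k` standing for the convergents `p_{k-2}`, `q_{k-2}` (index
shift by 2) of `p/q = [(a_0,ε_0),…,(a_{n̄},ε_{n̄})]`, `n̄ = N + 1`:
`p/q − p_T/q_T = (−1)^{n̄+1} ε_0⋯ε_{n̄−1}/(q q_{n̄−1})` and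
`p/q − p_S/q_S = (−1)^{n̄} ε_0⋯ε_{n̄−1}/(q q_S)`; in particular `p_T/q_T` and
`p_S/q_S` lie on opposite sides of `p/q`. -/
theorem truncate_subtract_distances (N : ℕ) (a ε p q : ℕ → ℤ)
    (hε : ∀ k, ε k = 1 ∨ ε k = -1)
    (hp0 : p 0 = 0) (hp1 : p 1 = 1) (hq0 : q 0 = 1) (hq1 : q 1 = 0)
    (hp2 : p 2 = a 0 * p 1 + p 0) (hq2 : q 2 = a 0 * q 1 + q 0)
    (hp : ∀ k, p (k + 3) = a (k + 1) * p (k + 2) + ε k * p (k + 1))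
    (hq : ∀ k, q (k + 3) = a (k + 1) * q (k + 2) + ε k * q (k + 1))
    (hqT : 0 < q (N + 2)) (hqn : 0 < q (N + 3))
    (hqS : 0 < (a (N + 1) - 1) * q (N + 2) + ε N * q (N + 1)) :
    let pT : ℤ := p (N + 2)
    let qT : ℤ := q (N + 2)
    let pS : ℤ := (a (N + 1) - 1) * p (N + 2) + ε N * p (N + 1)
    let qS : ℤ := (a (N + 1) - 1) * q (N + 2) + ε N * q (N + 1)
    let E : ℚ := ∏ i ∈ Finset.range (N + 1), (ε i : ℚ)
    ((p (N + 3) : ℚ) / (q (N + 3) : ℚ) - (pT : ℚ) / (qT : ℚ)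
        = (-1) ^ (N + 2) * E / ((q (N + 3) : ℚ) * (qT : ℚ))) ∧
    ((p (N + 3) : ℚ) / (q (N + 3) : ℚ) - (pS : ℚ) / (qS : ℚ)
        = (-1) ^ (N + 1) * E / ((q (N + 3) : ℚ) * (qS : ℚ))) ∧
    ((p (N + 3) : ℚ) / (q (N + 3) : ℚ) - (pT : ℚ) / (qT : ℚ))
      * ((p (N + 3) : ℚ) / (q (N + 3) : ℚ) - (pS : ℚ) / (qS : ℚ)) < 0 := by
  intro pT qT pS qS E
  have hdet := det_identity a ε p q hp0 hp1 hq0 hq1 hp2 hq2 hp hq (N + 1)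
  -- determinant in ℚ
  have hdetQ : (p (N + 3) : ℚ) * qT - (q (N + 3) : ℚ) * pT
      = (-1) ^ (N + 2) * E := by
    have := congrArg (fun z : ℤ => (z : ℚ)) hdet
    push_cast at this
    simpa [pT, qT, E] using this
  have hqnQ : (0 : ℚ) < (q (N + 3) : ℚ) := by exact_mod_cast hqn
  have hqTQ : (0 : ℚ) < (qT : ℚ) := by exact_mod_cast hqT
  have hqSQ : (0 : ℚ) < (qS : ℚ) := by exact_mod_cast hqS
  have hdetS : (p (N + 3) : ℚ) * qS - (q (N + 3) : ℚ) * pS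
      = (-1) ^ (N + 1) * E := by
    have hpn : (p (N + 3) : ℚ) = (a (N + 1) : ℚ) * p (N + 2) + ε N * p (N + 1) := by
      exact_mod_cast congrArg (fun z : ℤ => (z : ℚ)) (hp N)
    have hqn' : (q (N + 3) : ℚ) = (a (N + 1) : ℚ) * q (N + 2) + ε N * q (N + 1) := by
      exact_mod_cast congrArg (fun z : ℤ => (z : ℚ)) (hq N)
    have h1 : (p (N + 3) : ℚ) * qS - (q (N + 3) : ℚ) * pS
        = -((p (N + 3) : ℚ) * qT - (q (N + 3) : ℚ) * pT) := by
      simp only [pS, qS, pT, qT]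
      push_cast
      rw [hpn, hqn']; ring
    rw [h1, hdetQ, pow_succ]; ring
  have hT : (p (N + 3) : ℚ) / (q (N + 3) : ℚ) - (pT : ℚ) / (qT : ℚ)
      = (-1) ^ (N + 2) * E / ((q (N + 3) : ℚ) * (qT : ℚ)) := by
    rw [div_sub_div _ _ hqnQ.ne' hqTQ.ne', ← hdetQ]
  have hS : (p (N + 3) : ℚ) / (q (N + 3) : ℚ) - (pS : ℚ) / (qS : ℚ)
      = (-1) ^ (N + 1) * E / ((q (N + 3) : ℚ) * (qS : ℚ)) := by
    rw [div_sub_div _ _ hqnQ.ne' hqSQ.ne', ← hdetS]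
  refine ⟨hT, hS, ?_⟩
  rw [hT, hS]
  have hE2 : E * E = 1 := by
    simp only [E, ← Finset.prod_mul_distrib]
    apply Finset.prod_eq_one
    intro i _
    rcases hε i with h | h <;> simp [h]
  have key : ((-1 : ℚ) ^ (N + 2) * E / ((q (N + 3) : ℚ) * qT)) *
      ((-1) ^ (N + 1) * E / ((q (N + 3) : ℚ) * qS))
      = -(1 / ((q (N + 3) : ℚ) * qT * ((q (N + 3) : ℚ) * qS))) := by
    field_simp
    rw [pow_succ]
    ring_nf
    rw [sq, hE2, mul_comm N 2, pow_mul]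
    norm_num
  rw [key]
  simp only [neg_neg, neg_lt_zero]
  positivity
end

section
/- Let p/q ∈ [0,1) have finite nearest integer continued fraction [(a_0,ε_0),…,(a_k,ε_k)], and set (â_i, ε̂_i) = (a_i, Id) if ε_i = +1 and (â_i, ε̂_i) = (a_i − 1, σ) if ε_i = −1. Then the product ε̂_0 g(â_1) ⋯ g(â_{k−1}) ε̂_{k−1} g(a_k) equals the matrix ( p_{k−1} p_k ; q_{k−1} q_k ), where p_j/q_j are the convergents of p/q. -/
/-- The matrix `g(m) = (0 1; 1 m)`. -/
def gmat (m : ℤ) : Matrix (Fin 2) (Fin 2) ℤ := !![0, 1; 1, m]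

/-- The matrix `σ = (-1 1; 0 1)`. -/
def sigmaMat : Matrix (Fin 2) (Fin 2) ℤ := !![-1, 1; 0, 1]

lemma key_step (ε' A B : ℤ) (h : ε' = 1 ∨ ε' = -1) :
    gmat (if ε' = 1 then A else A - 1) * ((if ε' = 1 then 1 else sigmaMat) * gmat B)
      = gmat A * !![0, ε'; 1, B] := by
  rcases h with h | h <;> subst h <;> norm_num [gmat, sigmaMat] <;>
    ring

/-- With `p k`, `q k` standing for the convergents `p_{k-2}`, `q_{k-2}` (index
shift by 2) of `p/q = [(a_0,ε_0),…,(a_k,ε_k)]` with `p/q ∈ [0,1)` (so that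
`(a_0,ε_0)` is `(0,+1)` or `(1,−1)`) and `k = K + 1 ≥ 1`, the product
`ε̂_0 g(â_1) ⋯ g(â_{k−1}) ε̂_{k−1} g(a_k)`, where
`(â_i, ε̂_i) = (a_i, 1)` if `ε_i = +1` and `(a_i − 1, σ)` if `ε_i = −1`,
equals the matrix `(p_{k−1} p_k ; q_{k−1} q_k)`. -/
theorem monoid_word_eq_convergent_matrix (K : ℕ) (a ε p q : ℕ → ℤ)
    (hε : ∀ i, ε i = 1 ∨ ε i = -1)
    (h0 : (ε 0 = 1 ∧ a 0 = 0) ∨ (ε 0 = -1 ∧ a 0 = 1))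
    (hp0 : p 0 = 0) (hp1 : p 1 = 1) (hq0 : q 0 = 1) (hq1 : q 1 = 0)
    (hp2 : p 2 = a 0 * p 1 + p 0) (hq2 : q 2 = a 0 * q 1 + q 0)
    (hp : ∀ k, p (k + 3) = a (k + 1) * p (k + 2) + ε k * p (k + 1))
    (hq : ∀ k, q (k + 3) = a (k + 1) * q (k + 2) + ε k * q (k + 1)) :
    (List.ofFn (fun i : Fin K =>
        (if ε (i : ℕ) = 1 then 1 else sigmaMat)
          * gmat (if ε ((i : ℕ) + 1) = 1 then a ((i : ℕ) + 1)
                  else a ((i : ℕ) + 1) - 1))).prod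
      * ((if ε K = 1 then 1 else sigmaMat) * gmat (a (K + 1)))
    = !![p (K + 2), p (K + 3); q (K + 2), q (K + 3)] := by
  induction K with
  | zero =>
      have h3 := hp 0
      have h3q := hq 0
      rcases h0 with ⟨he, ha⟩ | ⟨he, ha⟩ <;>
        simp [he, ha, hp0, hp1, hq0, hq1, hp2, hq2, he] at h3 h3q ⊢ <;>
        simp [hp2, hq2, ha, hp0, hp1, hq0, hq1, h3, h3q, gmat, sigmaMat] <;>
        ring
  | succ K ih =>
      rw [List.ofFn_succ', List.concat_eq_append, List.prod_append, List.prod_cons,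
        List.prod_nil, mul_one]
      simp only [Fin.val_last, Fin.coe_castSucc]
      rw [mul_assoc, mul_assoc, key_step _ _ _ (hε (K + 1)), ← mul_assoc, ← mul_assoc,
        mul_assoc _ _ (gmat (a (K + 1))), ih]
      have h1 := hp (K + 1)
      have h2 := hq (K + 1)
      ext i j <;> fin_cases i <;> fin_cases j <;>
        simp [Matrix.mul_apply, Fin.sum_univ_succ, h1, h2] <;> ring
end

section
/- The Hilbert transform of the function −log x on (0, 1/2] is given explicitly by φ(z) = (1/π) ∫₀^{1/2} (−log x)/(x − z) dx = −(1/π) Li₂(1/(2z)) + (1/π) log 2 · log(1 − 1/(2z)) for z ∈ ℂ \ [0, 1/2], where Li₂ is the dilogarithm. -/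
/-!
Put `k(x) = log (1 - x / z)`. Since `z ∉ [0, a]`, `1 - x / z` stays in the slit plane for
`x ∈ [0, a]`, so `k` is smooth there with `k' = 1 / (x - z)` and `k(0) = 0`; hence
`k(x) = O(x)`, which makes `k(x) / x` integrable and `log x · k(x) → 0` as `x → 0⁺`.
Integrating `(log x · k(x))' = log x / (x - z) + k(x) / x` over `(0, a]` gives
`∫₀^a log x / (x - z) + ∫₀^a k(x) / x = log a · k(a)`, and the substitution `x = a t`
turns `∫₀^a k(x) / x` into `-Li₂(a / z)`. Take `a = 1/2`.
-/

/-- The dilogarithm on `ℂ \ [1,+∞)`, given by the integral representation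
`Li₂(w) = −∫₀¹ log(1 − w t)/t dt` (which agrees with `Σ_{n≥1} wⁿ/n²` on the
unit disc and is its analytic continuation). -/
noncomputable def Li2 (w : ℂ) : ℂ :=
  -∫ t in (0 : ℝ)..1, Complex.log (1 - w * (t : ℂ)) / (t : ℂ)

open Set MeasureTheory Filter Topology Complex

section

variable {a : ℝ} {z : ℂ}

lemma ofReal_sub_ne_zero_of_notMem_image {s : Set ℝ} (hz : z ∉ ofReal '' s) {x : ℝ}
    (hx : x ∈ s) : (x : ℂ) - z ≠ 0 :=
  fun h ↦ hz ⟨x, hx, sub_eq_zero.mp h⟩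

lemma one_sub_ofReal_div_mem_slitPlane (hz : z ∉ ofReal '' Icc 0 a) {x : ℝ}
    (hx : x ∈ Icc 0 a) : 1 - (x : ℂ) / z ∈ slitPlane := by
  by_contra h
  rw [mem_slitPlane_iff, not_or, not_lt, not_ne_iff] at h
  set w : ℂ := (x : ℂ) / z
  have hw_im : w.im = 0 := by simpa using h.2
  have hw_re : 1 ≤ w.re := by simpa using h.1
  have hz0 : z ≠ 0 := by
    rintro rfl
    norm_num [w] at hw_re
  have hw : w = (w.re : ℂ) := Complex.ext rfl (by simpa using hw_im)
  refine hz ⟨x / w.re, ⟨div_nonneg hx.1 (by linarith), (div_le_self hx.1 hw_re).trans hx.2⟩, ?_⟩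
  have hwx : (x : ℂ) = w * z := (div_mul_cancel₀ _ hz0).symm
  have hw0 : w ≠ 0 := by
    rw [hw]
    exact ofReal_ne_zero.mpr (by linarith)
  rw [ofReal_div, ← hw, hwx, mul_div_cancel_left₀ z hw0]

lemma hasDerivAt_log_one_sub_ofReal_div (hz : z ≠ 0) {x : ℝ}
    (hx : 1 - (x : ℂ) / z ∈ slitPlane) :
    HasDerivAt (fun y : ℝ ↦ log (1 - (y : ℂ) / z)) ((x - z)⁻¹) x := by
  have h : HasDerivAt (fun u : ℂ ↦ log (1 - u / z)) (-(1 / z) / (1 - x / z)) x :=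
    (((hasDerivAt_id' (x : ℂ)).div_const z).const_sub 1).clog hx
  convert h.comp_ofReal using 1
  have hxz : (x : ℂ) - z ≠ 0 := fun h ↦
    slitPlane_ne_zero hx (by rw [sub_eq_zero.mp h, div_self hz, sub_self])
  rw [eq_div_iff (slitPlane_ne_zero hx)]
  field_simp
  ring

lemma hasDerivAt_log_one_sub_ofReal_div_of_mem_Icc (hz : z ∉ ofReal '' Icc 0 a) {x : ℝ}
    (hx : x ∈ Icc 0 a) : HasDerivAt (fun y : ℝ ↦ log (1 - (y : ℂ) / z)) ((x - z)⁻¹) x := by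
  have hz0 : z ≠ 0 := fun h ↦ hz ⟨0, ⟨le_rfl, hx.1.trans hx.2⟩, by simp [h]⟩
  exact hasDerivAt_log_one_sub_ofReal_div hz0 (one_sub_ofReal_div_mem_slitPlane hz hx)

lemma exists_norm_log_one_sub_ofReal_div_le (hz : z ∉ ofReal '' Icc 0 a) :
    ∃ C, ∀ x ∈ Icc 0 a, ‖log (1 - (x : ℂ) / z)‖ ≤ C * x := by
  obtain ⟨C, hC⟩ := isCompact_Icc.exists_bound_of_continuousOn (f := fun x : ℝ ↦ ((x : ℂ) - z)⁻¹)
    fun x hx ↦ ((continuous_ofReal.sub continuous_const).continuousAt.inv₀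
      (ofReal_sub_ne_zero_of_notMem_image hz hx)).continuousWithinAt
  refine ⟨C, fun x hx ↦ ?_⟩
  simpa using norm_image_sub_le_of_norm_deriv_le_segment'
    (fun y hy ↦ (hasDerivAt_log_one_sub_ofReal_div_of_mem_Icc hz hy).hasDerivWithinAt)
    (fun y hy ↦ hC y (Ico_subset_Icc_self hy)) x hx

lemma intervalIntegrable_log_one_sub_ofReal_div_div (ha : 0 ≤ a) (hz : z ∉ ofReal '' Icc 0 a) :
    IntervalIntegrable (fun x : ℝ ↦ log (1 - (x : ℂ) / z) / x) volume 0 a := by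
  obtain ⟨C, hC⟩ := exists_norm_log_one_sub_ofReal_div_le hz
  rw [intervalIntegrable_iff_integrableOn_Ioc_of_le ha]
  have hmeas : Measurable fun x : ℝ ↦ log (1 - (x : ℂ) / z) / x := by fun_prop
  refine IntegrableOn.of_bound measure_Ioc_lt_top hmeas.aestronglyMeasurable C ?_
  filter_upwards [ae_restrict_mem measurableSet_Ioc] with x hx
  rw [norm_div, norm_real, Real.norm_of_nonneg hx.1.le, div_le_iff₀ hx.1]
  exact hC x (Ioc_subset_Icc_self hx)

lemma intervalIntegrable_log_div_ofReal_sub (ha : 0 ≤ a) (hz : z ∉ ofReal '' Icc 0 a) :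
    IntervalIntegrable (fun x : ℝ ↦ (Real.log x : ℂ) / (x - z)) volume 0 a := by
  have hlog : IntervalIntegrable (fun x : ℝ ↦ (Real.log x : ℂ)) volume 0 a :=
    ⟨intervalIntegral.intervalIntegrable_log'.1.ofReal,
      intervalIntegral.intervalIntegrable_log'.2.ofReal⟩
  simpa only [div_eq_mul_inv] using hlog.mul_continuousOn (g := fun x : ℝ ↦ ((x : ℂ) - z)⁻¹)
    fun x hx ↦ ((continuous_ofReal.sub continuous_const).continuousAt.inv₀
      (ofReal_sub_ne_zero_of_notMem_image hz (by rwa [uIcc_of_le ha] at hx))).continuousWithinAt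

lemma tendsto_log_mul_log_one_sub_ofReal_div (ha : 0 < a) (hz : z ∉ ofReal '' Icc 0 a) :
    Tendsto (fun x : ℝ ↦ (Real.log x : ℂ) * log (1 - (x : ℂ) / z)) (𝓝[>] 0) (𝓝 0) := by
  obtain ⟨C, hC⟩ := exists_norm_log_one_sub_ofReal_div_le hz
  have hmul_log : Tendsto (fun x : ℝ ↦ C * ‖x * Real.log x‖) (𝓝[>] 0) (𝓝 0) := by
    simpa using ((Real.continuous_mul_log.tendsto 0).norm.const_mul C).mono_left
      nhdsWithin_le_nhds
  refine squeeze_zero_norm' ?_ hmul_log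
  filter_upwards [Ioc_mem_nhdsGT ha] with x hx
  calc ‖(Real.log x : ℂ) * log (1 - (x : ℂ) / z)‖
      ≤ |Real.log x| * (C * x) := by
        rw [norm_mul, norm_real, Real.norm_eq_abs]
        exact mul_le_mul_of_nonneg_left (hC x (Ioc_subset_Icc_self hx)) (abs_nonneg _)
    _ = C * ‖x * Real.log x‖ := by
        rw [Real.norm_eq_abs, abs_mul, abs_of_pos hx.1]
        ring

theorem integral_log_div_ofReal_sub_add_integral_log_one_sub_ofReal_div (ha : 0 < a)
    (hz : z ∉ ofReal '' Icc 0 a) :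
    (∫ x in 0..a, (Real.log x : ℂ) / (x - z)) + ∫ x in 0..a, log (1 - (x : ℂ) / z) / x
      = Real.log a * log (1 - a / z) := by
  have hderiv : ∀ x ∈ Ioc 0 a, HasDerivAt (fun y : ℝ ↦ (Real.log y : ℂ) * log (1 - (y : ℂ) / z))
      ((Real.log x : ℂ) / (x - z) + log (1 - (x : ℂ) / z) / x) x := by
    intro x hx
    have h := ((Real.hasDerivAt_log hx.1.ne').ofReal_comp).fun_mul
      (hasDerivAt_log_one_sub_ofReal_div_of_mem_Icc hz (Ioc_subset_Icc_self hx))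
    exact h.congr_deriv (by push_cast; ring)
  rw [← intervalIntegral.integral_add (intervalIntegrable_log_div_ofReal_sub ha.le hz)
    (intervalIntegrable_log_one_sub_ofReal_div_div ha.le hz)]
  simpa using intervalIntegral.integral_eq_sub_of_hasDerivAt_of_tendsto ha
    (fun x hx ↦ hderiv x (Ioo_subset_Ioc_self hx))
    ((intervalIntegrable_log_div_ofReal_sub ha.le hz).add
      (intervalIntegrable_log_one_sub_ofReal_div_div ha.le hz))
    (tendsto_log_mul_log_one_sub_ofReal_div ha hz)
    ((hderiv a ⟨ha, le_rfl⟩).continuousAt.tendsto.mono_left nhdsWithin_le_nhds)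

end

theorem integral_log_one_sub_ofReal_div_div (a : ℝ) (z : ℂ) :
    ∫ x in 0..a, log (1 - (x : ℂ) / z) / x = -Li2 (a / z) := by
  rcases eq_or_ne a 0 with rfl | ha
  · simp [Li2]
  rw [Li2, neg_neg]
  calc ∫ x in 0..a, log (1 - (x : ℂ) / z) / x
      = a • ∫ t in 0..1, log (1 - ((a * t : ℝ) : ℂ) / z) / ((a * t : ℝ) : ℂ) := by
        simpa using (intervalIntegral.smul_integral_comp_mul_left
          (fun x : ℝ ↦ log (1 - (x : ℂ) / z) / x) a (a := 0) (b := 1)).symm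
    _ = ∫ t in 0..1, log (1 - a / z * t) / t := by
        rw [← intervalIntegral.integral_smul]
        congr 1 with t
        rw [real_smul, ofReal_mul, ← mul_div_assoc, mul_div_mul_left _ _ (ofReal_ne_zero.mpr ha),
          mul_div_right_comm]

/-- Explicit formula for the Hilbert transform of `−log x` on `(0,1/2]`. -/
theorem hilbert_transform_log (z : ℂ)
    (hz : z ∉ (fun t : ℝ => (t : ℂ)) '' Set.Icc (0 : ℝ) (1 / 2)) :
    (1 / (Real.pi : ℂ)) * ∫ x in (0 : ℝ)..(1 / 2 : ℝ),
        (-(Real.log x) : ℂ) / ((x : ℂ) - z)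
      = -(1 / (Real.pi : ℂ)) * Li2 (1 / (2 * z))
        + (1 / (Real.pi : ℂ)) * (Real.log 2 : ℂ) * Complex.log (1 - 1 / (2 * z)) := by
  have h := integral_log_div_ofReal_sub_add_integral_log_one_sub_ofReal_div
    (by norm_num : (0 : ℝ) < 1 / 2) hz
  have hhalf : ((1 / 2 : ℝ) : ℂ) / z = 1 / (2 * z) := by push_cast; ring
  have hlog_half : Real.log (1 / 2) = -Real.log 2 := by rw [one_div, Real.log_inv]
  rw [integral_log_one_sub_ofReal_div_div, hhalf, hlog_half] at h
  simp only [neg_div, intervalIntegral.integral_neg]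
  push_cast at h
  linear_combination (-(1 / (Real.pi : ℂ))) * h
end
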